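/- arXiv:2011.00664 — 4 statements merged into one kernel-verified Lean document; each statement's English description precedes it below -/
import Mathlib

section
/- Let f(s) = a₄s⁴ + a₃s³ + a₂s² + a₁s + a₀ be a real quartic polynomial with all coefficients aᵢ > 0. Then f has no roots with strictly positive real part if and only if a₁(a₂a₃ − a₁a₄) − a₀a₃² ≥ 0. -/
/-!
Over `ℝ` the quartic splits into two monic quadratics, `a₄ (s² + p s + q) (s² + r s + t)`, and a
real quadratic `s² + p s + q` has no root in the open right half-plane exactly when `p, q ≥ 0`.
In these coordinates the Hurwitz determinant factors as
`a₁(a₂a₃ - a₁a₄) - a₀a₃² = a₄³ ((q - t)² + (p + r)(p t + q r)) · p r`,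
and positivity of `a₀ = a₄ q t`, `a₁ = a₄ (p t + q r)`, `a₃ = a₄ (p + r)` makes the first factor
positive and forces `p, q, r, t ≥ 0` as soon as `p r ≥ 0`.
-/

open Polynomial

theorem Polynomial.exists_quadratic_dvd_of_two_le_natDegree {f : ℝ[X]} (hf : 2 ≤ f.natDegree) :
    ∃ p q : ℝ, X ^ 2 + C p * X + C q ∣ f := by
  induction hn : f.natDegree using Nat.strong_induction_on generalizing f with
  | _ n ih =>
  obtain ⟨z, hz⟩ := IsAlgClosed.exists_aeval_eq_zero ℂ f
    (natDegree_pos_iff_degree_pos.1 (by omega)).ne'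
  by_cases hzim : z.im = 0
  · set x := z.re
    have hroot : f.IsRoot x := by
      rwa [show z = algebraMap ℝ ℂ x from Complex.ext (by simp [x]) (by simp [hzim]),
        aeval_algebraMap_eq_zero_iff] at hz
    set g := f /ₘ (X - C x)
    have hfg : (X - C x) * g = f := mul_divByMonic_eq_iff_isRoot.2 hroot
    have hg : g.natDegree = n - 1 := by
      rw [natDegree_divByMonic _ (monic_X_sub_C _), natDegree_X_sub_C, hn]
    rcases (show n - 1 = 1 ∨ 2 ≤ n - 1 by omega) with hg_one | hg_two
    · obtain ⟨y, hy⟩ := exists_root_of_degree_eq_one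
        ((degree_eq_iff_natDegree_eq_of_pos one_pos).2 (hg.trans hg_one))
      refine ⟨-(x + y), x * y, ?_⟩
      rw [← hfg, show (X ^ 2 + C (-(x + y)) * X + C (x * y) : ℝ[X]) = (X - C x) * (X - C y) by
        simp only [map_neg, map_add, map_mul]; ring]
      exact mul_dvd_mul_left _ (dvd_iff_isRoot.2 hy)
    · obtain ⟨p, q, hpq⟩ := ih (n - 1) (by omega) (hg ▸ hg_two) hg
      exact ⟨p, q, hpq.trans (Dvd.intro_left _ hfg)⟩
  · refine ⟨-(2 * z.re), ‖z‖ ^ 2, ?_⟩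
    simpa [sub_eq_add_neg] using quadratic_dvd_of_aeval_eq_zero_im_ne_zero f hz hzim

theorem exists_quadratic_factorization_of_quartic (a₀ a₁ a₂ a₃ a₄ : ℝ) (h₄ : a₄ ≠ 0) :
    ∃ p q r t : ℝ, a₃ = a₄ * (p + r) ∧ a₂ = a₄ * (q + t + p * r) ∧
      a₁ = a₄ * (p * t + q * r) ∧ a₀ = a₄ * (q * t) := by
  set f : ℝ[X] := C a₄ * X ^ 4 + C a₃ * X ^ 3 + C a₂ * X ^ 2 + C a₁ * X + C a₀ with hf_def
  have hf : f.natDegree = 4 := by rw [hf_def]; compute_degree!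
  obtain ⟨p, q, g, hfg⟩ := exists_quadratic_dvd_of_two_le_natDegree (f := f) (by omega)
  have hg : g.natDegree = 2 := by
    have hg0 : g ≠ 0 := by rintro rfl; simp [hfg] at hf
    have hmonic : (X ^ 2 + C p * X + C q : ℝ[X]).Monic := by monicity!
    rw [hfg, natDegree_mul hmonic.ne_zero hg0,
      show (X ^ 2 + C p * X + C q : ℝ[X]).natDegree = 2 by compute_degree!] at hf
    omega
  set b₂ := g.coeff 2
  set b₁ := g.coeff 1
  set b₀ := g.coeff 0
  have hexp : (X ^ 2 + C p * X + C q) * (C b₂ * X ^ 2 + C b₁ * X + C b₀) =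
      C b₂ * X ^ 4 + C (b₁ + p * b₂) * X ^ 3 + C (b₀ + p * b₁ + q * b₂) * X ^ 2 +
        C (p * b₀ + q * b₁) * X + C (q * b₀) := by
    simp only [map_add, map_mul]; ring
  rw [eq_quadratic_of_degree_le_two (natDegree_le_iff_degree_le.1 hg.le), hexp] at hfg
  have e₄ : a₄ = b₂ := by simpa [f, -map_add, -map_mul] using congrArg (coeff · 4) hfg
  have e₃ : a₃ = b₁ + p * b₂ := by simpa [f, -map_add, -map_mul] using congrArg (coeff · 3) hfg
  have e₂ : a₂ = b₀ + p * b₁ + q * b₂ := by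
    simpa [f, -map_add, -map_mul] using congrArg (coeff · 2) hfg
  have e₁ : a₁ = p * b₀ + q * b₁ := by simpa [f, -map_add, -map_mul] using congrArg (coeff · 1) hfg
  have e₀ : a₀ = q * b₀ := by simpa [f, -map_add, -map_mul] using congrArg (coeff · 0) hfg
  subst e₄
  refine ⟨p, q, b₁ / b₂, b₀ / b₂, ?_, ?_, ?_, ?_⟩ <;> field_simp
  · linear_combination e₃
  · linear_combination e₂
  · linear_combination e₁
  · linear_combination e₀

theorem quadratic_roots_re_nonpos_iff (p q : ℝ) :
    (∀ s : ℂ, s ^ 2 + p * s + q = 0 → s.re ≤ 0) ↔ 0 ≤ p ∧ 0 ≤ q := by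
  constructor
  · intro h
    -- the root `-p/2 + w`, with the square root `w` of `p²/4 - q` taken in the right half-plane
    obtain ⟨w, hw⟩ := IsAlgClosed.exists_pow_nat_eq ((p : ℂ) ^ 2 / 4 - q) two_pos
    wlog hw_re : 0 ≤ w.re generalizing w
    · exact this (-w) (by rw [neg_sq, hw]) (by simp only [Complex.neg_re]; linarith)
    have hre : -p / 2 + w.re ≤ 0 := by
      simpa using h (↑(-p / 2) + w) (by push_cast; linear_combination hw)
    have hsq : w.re ^ 2 - w.im ^ 2 = p ^ 2 / 4 - q := by
      simpa [pow_two] using congrArg Complex.re hw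
    have hx : w.re ≤ p / 2 := by linarith
    exact ⟨by linarith,
      by nlinarith [mul_nonneg (sub_nonneg.2 hx) (add_nonneg hw_re hw_re), sq_nonneg w.im]⟩
  · rintro ⟨hp, hq⟩ s hs
    have hre : s.re ^ 2 - s.im ^ 2 + p * s.re + q = 0 := by
      simpa [pow_two] using congrArg Complex.re hs
    have him : s.im * (2 * s.re + p) = 0 := by
      have := congrArg Complex.im hs
      simp only [pow_two, Complex.add_im, Complex.mul_im, Complex.ofReal_re, Complex.ofReal_im,
        Complex.zero_im] at this
      linear_combination this
    by_contra! hpos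
    have hy : s.im = 0 := (mul_eq_zero.1 him).resolve_right (by linarith)
    nlinarith

theorem quadratic_factor_coeffs_nonneg {p q r t : ℝ} (hpr : 0 < p + r) (hqt : 0 < q * t)
    (hptqr : 0 < p * t + q * r) (h : 0 ≤ p * r) : (0 ≤ p ∧ 0 ≤ q) ∧ 0 ≤ r ∧ 0 ≤ t := by
  have hp : 0 ≤ p := by nlinarith
  have hr : 0 ≤ r := by nlinarith
  have hq : 0 < q := by
    by_contra! hq
    have ht : t < 0 := by nlinarith
    nlinarith [mul_nonpos_of_nonneg_of_nonpos hp ht.le, mul_nonpos_of_nonpos_of_nonneg hq hr]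
  exact ⟨⟨hp, hq.le⟩, hr, (pos_of_mul_pos_right hqt hq.le).le⟩

theorem stmt_1_general (a₀ a₁ a₂ a₃ a₄ : ℝ)
    (h₀ : 0 < a₀) (h₁ : 0 < a₁) (h₃ : 0 < a₃) (h₄ : 0 < a₄) :
    (∀ s : ℂ, (a₄ : ℂ) * s ^ 4 + (a₃ : ℂ) * s ^ 3 + (a₂ : ℂ) * s ^ 2 +
        (a₁ : ℂ) * s + (a₀ : ℂ) = 0 → s.re ≤ 0) ↔
    0 ≤ a₁ * (a₂ * a₃ - a₁ * a₄) - a₀ * a₃ ^ 2 := by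
  obtain ⟨p, q, r, t, e₃, e₂, e₁, e₀⟩ :=
    exists_quadratic_factorization_of_quartic a₀ a₁ a₂ a₃ a₄ h₄.ne'
  have hfactor : ∀ s : ℂ, (a₄ : ℂ) * s ^ 4 + (a₃ : ℂ) * s ^ 3 + (a₂ : ℂ) * s ^ 2 +
      (a₁ : ℂ) * s + (a₀ : ℂ) = a₄ * ((s ^ 2 + p * s + q) * (s ^ 2 + r * s + t)) := by
    intro s
    simp only [e₃, e₂, e₁, e₀]
    push_cast
    ring
  have hdet : a₁ * (a₂ * a₃ - a₁ * a₄) - a₀ * a₃ ^ 2 =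
      a₄ ^ 3 * ((q - t) ^ 2 + (p + r) * (p * t + q * r)) * (p * r) := by
    rw [e₃, e₂, e₁, e₀]
    ring
  have hpr : 0 < p + r := pos_of_mul_pos_right (e₃ ▸ h₃) h₄.le
  have hqt : 0 < q * t := pos_of_mul_pos_right (e₀ ▸ h₀) h₄.le
  have hptqr : 0 < p * t + q * r := pos_of_mul_pos_right (e₁ ▸ h₁) h₄.le
  simp only [hfactor, mul_eq_zero, Complex.ofReal_eq_zero, h₄.ne', false_or, or_imp, forall_and,
    quadratic_roots_re_nonpos_iff, hdet]
  rw [mul_nonneg_iff_of_pos_left (by positivity)]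
  exact ⟨fun ⟨⟨hp, _⟩, hr, _⟩ => mul_nonneg hp hr,
    quadratic_factor_coeffs_nonneg hpr hqt hptqr⟩

/-- Routh–Hurwitz for a quartic with positive coefficients:
no roots with strictly positive real part iff `a₁(a₂a₃ - a₁a₄) - a₀a₃² ≥ 0`. -/
theorem stmt_1 (a₀ a₁ a₂ a₃ a₄ : ℝ)
    (h₀ : 0 < a₀) (h₁ : 0 < a₁) (h₂ : 0 < a₂) (h₃ : 0 < a₃) (h₄ : 0 < a₄) :
    (∀ s : ℂ, (a₄ : ℂ) * s ^ 4 + (a₃ : ℂ) * s ^ 3 + (a₂ : ℂ) * s ^ 2 +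
        (a₁ : ℂ) * s + (a₀ : ℂ) = 0 → s.re ≤ 0) ↔
    0 ≤ a₁ * (a₂ * a₃ - a₁ * a₄) - a₀ * a₃ ^ 2 :=
  stmt_1_general a₀ a₁ a₂ a₃ a₄ h₀ h₁ h₃ h₄
end

section
/- Let f(s) = a₄s⁴ + a₃s³ + a₂s² + a₁s + a₀ be a real quartic with all coefficients aᵢ > 0 satisfying a₁(a₂a₃ − a₁a₄) ≥ a₀a₃². Then f has a root on the imaginary axis if and only if a₁(a₂a₃ − a₁a₄) = a₀a₃², and in that case the imaginary-axis roots form a simple conjugate pair ±jp with p = √(a₀a₃/(a₂a₃ − a₁a₄)). -/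
/-!
On the imaginary axis `f(jω) = (a₄ω⁴ - a₂ω² + a₀) + j ω (a₁ - a₃ω²)`. Since `a₀ ≠ 0`, a root has
`ω ≠ 0`, so the imaginary part forces `a₃ω² = a₁`; substituting this into the real part gives
`a₃² (a₄ω⁴ - a₂ω² + a₀) = a₀a₃² - a₁(a₂a₃ - a₁a₄)`. In the equality case `p² = a₁/a₃`, and the
real part of `f'(jω)` is `a₁ - 3a₃ω² = -2a₁ ≠ 0`, so the roots `±jp` are simple.
-/

open Complex

lemma ofReal_add_ofReal_mul_I_eq_zero_iff (x y : ℝ) : (x : ℂ) + y * I = 0 ↔ x = 0 ∧ y = 0 := by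
  simp [Complex.ext_iff]

lemma quartic_ofReal_mul_I_eq_zero_iff (a₀ a₁ a₂ a₃ a₄ ω : ℝ) :
    (a₄ : ℂ) * ((ω : ℂ) * I) ^ 4 + (a₃ : ℂ) * ((ω : ℂ) * I) ^ 3 +
        (a₂ : ℂ) * ((ω : ℂ) * I) ^ 2 + (a₁ : ℂ) * ((ω : ℂ) * I) + (a₀ : ℂ) = 0 ↔
      a₄ * ω ^ 4 - a₂ * ω ^ 2 + a₀ = 0 ∧ ω * (a₁ - a₃ * ω ^ 2) = 0 := by
  have hsplit : (a₄ : ℂ) * ((ω : ℂ) * I) ^ 4 + (a₃ : ℂ) * ((ω : ℂ) * I) ^ 3 +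
      (a₂ : ℂ) * ((ω : ℂ) * I) ^ 2 + (a₁ : ℂ) * ((ω : ℂ) * I) + (a₀ : ℂ) =
      ((a₄ * ω ^ 4 - a₂ * ω ^ 2 + a₀ : ℝ) : ℂ) + ((ω * (a₁ - a₃ * ω ^ 2) : ℝ) : ℂ) * I := by
    simp only [mul_pow, I_sq, I_pow_three, I_pow_four]
    push_cast
    ring
  rw [hsplit, ofReal_add_ofReal_mul_I_eq_zero_iff]

lemma cubic_ofReal_mul_I_eq_zero_iff (a₁ a₂ a₃ a₄ ω : ℝ) :
    4 * (a₄ : ℂ) * ((ω : ℂ) * I) ^ 3 + 3 * (a₃ : ℂ) * ((ω : ℂ) * I) ^ 2 +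
        2 * (a₂ : ℂ) * ((ω : ℂ) * I) + (a₁ : ℂ) = 0 ↔
      a₁ - 3 * a₃ * ω ^ 2 = 0 ∧ ω * (2 * a₂ - 4 * a₄ * ω ^ 2) = 0 := by
  have hsplit : 4 * (a₄ : ℂ) * ((ω : ℂ) * I) ^ 3 + 3 * (a₃ : ℂ) * ((ω : ℂ) * I) ^ 2 +
      2 * (a₂ : ℂ) * ((ω : ℂ) * I) + (a₁ : ℂ) =
      ((a₁ - 3 * a₃ * ω ^ 2 : ℝ) : ℂ) + ((ω * (2 * a₂ - 4 * a₄ * ω ^ 2) : ℝ) : ℂ) * I := by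
    simp only [mul_pow, I_sq, I_pow_three]
    push_cast
    ring
  rw [hsplit, ofReal_add_ofReal_mul_I_eq_zero_iff]

lemma quartic_parts_eq_zero_iff {a₀ a₁ a₂ a₃ a₄ ω : ℝ} (h₀ : a₀ ≠ 0) (h₃ : a₃ ≠ 0) :
    a₄ * ω ^ 4 - a₂ * ω ^ 2 + a₀ = 0 ∧ ω * (a₁ - a₃ * ω ^ 2) = 0 ↔
      a₃ * ω ^ 2 = a₁ ∧ a₁ * (a₂ * a₃ - a₁ * a₄) = a₀ * a₃ ^ 2 := by
  constructor
  · rintro ⟨hre, him⟩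
    have hω : ω ≠ 0 := by
      rintro rfl
      exact h₀ (by simpa using hre)
    have hω2 : a₃ * ω ^ 2 = a₁ := by
      linarith [(mul_eq_zero.mp him).resolve_left hω]
    exact ⟨hω2, by linear_combination (a₄ * (a₁ + a₃ * ω ^ 2) - a₂ * a₃) * hω2 - a₃ ^ 2 * hre⟩
  · rintro ⟨hω2, heq⟩
    refine ⟨?_, by linear_combination (-ω) * hω2⟩
    have hre : a₃ ^ 2 * (a₄ * ω ^ 4 - a₂ * ω ^ 2 + a₀) = 0 := by
      linear_combination (a₄ * (a₃ * ω ^ 2 + a₁) - a₂ * a₃) * hω2 - heq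
    exact (mul_eq_zero.mp hre).resolve_left (pow_ne_zero 2 h₃)

lemma div_eq_div_of_hurwitz_eq {a₀ a₁ a₂ a₃ a₄ : ℝ} (h₀ : a₀ ≠ 0) (h₃ : a₃ ≠ 0)
    (heq : a₁ * (a₂ * a₃ - a₁ * a₄) = a₀ * a₃ ^ 2) :
    a₀ * a₃ / (a₂ * a₃ - a₁ * a₄) = a₁ / a₃ := by
  have hD : a₂ * a₃ - a₁ * a₄ ≠ 0 := by
    rintro hD
    rw [hD, mul_zero] at heq
    exact mul_ne_zero h₀ (pow_ne_zero 2 h₃) heq.symm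
  rw [div_eq_div_iff hD h₃]
  linear_combination -heq

theorem stmt_2_general (a₀ a₁ a₂ a₃ a₄ : ℝ)
    (h₀ : 0 < a₀) (h₁ : 0 < a₁) (h₃ : 0 < a₃) :
    ((∃ ω : ℝ, (a₄ : ℂ) * ((ω : ℂ) * Complex.I) ^ 4 +
        (a₃ : ℂ) * ((ω : ℂ) * Complex.I) ^ 3 +
        (a₂ : ℂ) * ((ω : ℂ) * Complex.I) ^ 2 +
        (a₁ : ℂ) * ((ω : ℂ) * Complex.I) + (a₀ : ℂ) = 0) ↔
      a₁ * (a₂ * a₃ - a₁ * a₄) = a₀ * a₃ ^ 2) ∧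
    (a₁ * (a₂ * a₃ - a₁ * a₄) = a₀ * a₃ ^ 2 →
      ∀ ω : ℝ,
        ((a₄ : ℂ) * ((ω : ℂ) * Complex.I) ^ 4 +
          (a₃ : ℂ) * ((ω : ℂ) * Complex.I) ^ 3 +
          (a₂ : ℂ) * ((ω : ℂ) * Complex.I) ^ 2 +
          (a₁ : ℂ) * ((ω : ℂ) * Complex.I) + (a₀ : ℂ) = 0 ↔
          (ω = Real.sqrt (a₀ * a₃ / (a₂ * a₃ - a₁ * a₄)) ∨
           ω = -Real.sqrt (a₀ * a₃ / (a₂ * a₃ - a₁ * a₄)))) ∧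
        ((a₄ : ℂ) * ((ω : ℂ) * Complex.I) ^ 4 +
          (a₃ : ℂ) * ((ω : ℂ) * Complex.I) ^ 3 +
          (a₂ : ℂ) * ((ω : ℂ) * Complex.I) ^ 2 +
          (a₁ : ℂ) * ((ω : ℂ) * Complex.I) + (a₀ : ℂ) = 0 →
          4 * (a₄ : ℂ) * ((ω : ℂ) * Complex.I) ^ 3 +
          3 * (a₃ : ℂ) * ((ω : ℂ) * Complex.I) ^ 2 +
          2 * (a₂ : ℂ) * ((ω : ℂ) * Complex.I) + (a₁ : ℂ) ≠ 0)) := by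
  have hsq : ∀ ω : ℝ, a₃ * ω ^ 2 = a₁ ↔ ω ^ 2 = Real.sqrt (a₁ / a₃) ^ 2 := by
    intro ω
    rw [Real.sq_sqrt (by positivity), eq_div_iff h₃.ne', mul_comm]
  simp only [quartic_ofReal_mul_I_eq_zero_iff, cubic_ofReal_mul_I_eq_zero_iff,
    quartic_parts_eq_zero_iff h₀.ne' h₃.ne', ne_eq]
  refine ⟨⟨fun ⟨_, _, heq⟩ ↦ heq, fun heq ↦ ⟨_, (hsq _).mpr rfl, heq⟩⟩, fun heq ω ↦ ⟨?_, ?_⟩⟩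
  · rw [div_eq_div_of_hurwitz_eq h₀.ne' h₃.ne' heq, ← sq_eq_sq_iff_eq_or_eq_neg, ← hsq]
    exact and_iff_left heq
  · rintro ⟨hω2, -⟩ ⟨hderiv, -⟩
    linarith

/-- A quartic with positive coefficients satisfying
`a₁(a₂a₃ - a₁a₄) ≥ a₀a₃²` has a root on the imaginary axis iff
`a₁(a₂a₃ - a₁a₄) = a₀a₃²`, in which case the imaginary-axis roots are exactly
the simple conjugate pair `±jp` with `p = √(a₀a₃/(a₂a₃ - a₁a₄))`
(simplicity expressed by nonvanishing of the derivative). -/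
theorem stmt_2 (a₀ a₁ a₂ a₃ a₄ : ℝ)
    (h₀ : 0 < a₀) (h₁ : 0 < a₁) (h₂ : 0 < a₂) (h₃ : 0 < a₃) (h₄ : 0 < a₄)
    (hRH : a₀ * a₃ ^ 2 ≤ a₁ * (a₂ * a₃ - a₁ * a₄)) :
    ((∃ ω : ℝ, (a₄ : ℂ) * ((ω : ℂ) * Complex.I) ^ 4 +
        (a₃ : ℂ) * ((ω : ℂ) * Complex.I) ^ 3 +
        (a₂ : ℂ) * ((ω : ℂ) * Complex.I) ^ 2 +
        (a₁ : ℂ) * ((ω : ℂ) * Complex.I) + (a₀ : ℂ) = 0) ↔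
      a₁ * (a₂ * a₃ - a₁ * a₄) = a₀ * a₃ ^ 2) ∧
    (a₁ * (a₂ * a₃ - a₁ * a₄) = a₀ * a₃ ^ 2 →
      ∀ ω : ℝ,
        ((a₄ : ℂ) * ((ω : ℂ) * Complex.I) ^ 4 +
          (a₃ : ℂ) * ((ω : ℂ) * Complex.I) ^ 3 +
          (a₂ : ℂ) * ((ω : ℂ) * Complex.I) ^ 2 +
          (a₁ : ℂ) * ((ω : ℂ) * Complex.I) + (a₀ : ℂ) = 0 ↔
          (ω = Real.sqrt (a₀ * a₃ / (a₂ * a₃ - a₁ * a₄)) ∨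
           ω = -Real.sqrt (a₀ * a₃ / (a₂ * a₃ - a₁ * a₄)))) ∧
        ((a₄ : ℂ) * ((ω : ℂ) * Complex.I) ^ 4 +
          (a₃ : ℂ) * ((ω : ℂ) * Complex.I) ^ 3 +
          (a₂ : ℂ) * ((ω : ℂ) * Complex.I) ^ 2 +
          (a₁ : ℂ) * ((ω : ℂ) * Complex.I) + (a₀ : ℂ) = 0 →
          4 * (a₄ : ℂ) * ((ω : ℂ) * Complex.I) ^ 3 +
          3 * (a₃ : ℂ) * ((ω : ℂ) * Complex.I) ^ 2 +
          2 * (a₂ : ℂ) * ((ω : ℂ) * Complex.I) + (a₁ : ℂ) ≠ 0)) :=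
  stmt_2_general a₀ a₁ a₂ a₃ a₄ h₀ h₁ h₃
end

section
/- Let p(x) = p₃x³ + p₂x² + p₁x + p₀ be a real cubic polynomial with p₃ > 0 and p₀ ≥ 0. If p₁ ≥ 0 and p₂ ≥ −√(3p₁p₃), then p(x) ≥ 0 for all x ≥ 0. -/
/-!
Write `p(x) = x (p₃ x² + p₂ x + p₁) + p₀`. For `x ≥ 0` the bracket is at least
`p₃ x² - √(3 p₁ p₃) x + p₁`, a quadratic with positive leading coefficient and discriminant
`3 p₁ p₃ - 4 p₁ p₃ = -p₁ p₃ ≤ 0`, hence nonnegative.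
-/

theorem quadratic_nonneg_of_discrim_nonpos {K : Type*} [Field K] [LinearOrder K]
    [IsStrictOrderedRing K] {a b c : K} (ha : 0 < a) (h : discrim a b c ≤ 0) (x : K) :
    0 ≤ a * (x * x) + b * x + c := by
  have hcompleted : 4 * a * (a * (x * x) + b * x + c) = (2 * a * x + b) ^ 2 - discrim a b c := by
    rw [discrim]; ring
  have : 0 ≤ 4 * a * (a * (x * x) + b * x + c) :=
    hcompleted ▸ sub_nonneg.mpr (h.trans (sq_nonneg _))
  exact nonneg_of_mul_nonneg_right this (by positivity)

/-- sufficient condition (a) for nonnegativity of a cubic on `[0, ∞)`. -/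
theorem stmt_3 (p₀ p₁ p₂ p₃ : ℝ) (h₃ : 0 < p₃) (h₀ : 0 ≤ p₀)
    (h₁ : 0 ≤ p₁) (h₂ : -Real.sqrt (3 * p₁ * p₃) ≤ p₂) :
    ∀ x : ℝ, 0 ≤ x → 0 ≤ p₃ * x ^ 3 + p₂ * x ^ 2 + p₁ * x + p₀ := by
  intro x hx
  have hdisc : discrim p₃ (-Real.sqrt (3 * p₁ * p₃)) p₁ ≤ 0 := by
    rw [discrim, neg_sq, Real.sq_sqrt (by positivity)]
    linear_combination mul_nonneg h₁ h₃.le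
  have hquad := quadratic_nonneg_of_discrim_nonpos h₃ hdisc x
  calc 0 ≤ x * (p₃ * (x * x) + -Real.sqrt (3 * p₁ * p₃) * x + p₁) + p₀ :=
        add_nonneg (mul_nonneg hx hquad) h₀
    _ ≤ p₃ * x ^ 3 + p₂ * x ^ 2 + p₁ * x + p₀ := by
      linear_combination mul_le_mul_of_nonneg_right h₂ (sq_nonneg x)
end

section
/- Let p(x) = p₃x³ + p₂x² + p₁x + p₀ be a real cubic polynomial with p₃ > 0 and p₀ ≥ 0. Suppose σ := p₂² − 3p₁p₃ > 0, p₁p₂ − 9p₀p₃ < 0, and 4p₂(p₁p₂ − 9p₀p₃) < 4p₁σ + 3p₃(p₁p₂ − 9p₀p₃)²/σ. Then p(x) ≥ 0 for all x ≥ 0. -/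
/-!
The substitution `u = 3 p₃ x + p₂` turns `27 p₃² p(x)` into the depressed cubic
`q(u) = u³ - 3 s² u + d` with `s = √σ` and `d = 2p₂³ - 9p₁p₂p₃ + 27p₀p₃²`, and `x ≥ 0` becomes
`u ≥ p₂`. The hypotheses say that `q(p₂) = 27 p₀ p₃² ≥ 0`, that `d - 2 s² p₂ = -3 p₃ τ > 0`, and that
the discriminant is negative, `d² > 4 s⁶`. These force the local minimum `q(s) = d - 2 s³` to be
positive; on `[-s, ∞)` this bounds `q` from below, and on `[p₂, -s]` the cubic is increasing, so it
stays above `q(p₂)`.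
-/

/-- The depressed cubic with critical points `±s`. -/
def depressedCubic (s d u : ℝ) : ℝ := u ^ 3 - 3 * s ^ 2 * u + d

lemma depressedCubic_eq_sq_mul_add (s d u : ℝ) :
    depressedCubic s d u = (u - s) ^ 2 * (u + 2 * s) + (d - 2 * s ^ 3) := by
  unfold depressedCubic; ring

lemma depressedCubic_monotoneOn {s : ℝ} (hs : 0 ≤ s) (d : ℝ) :
    MonotoneOn (depressedCubic s d) (Set.Iic (-s)) := by
  intro a ha b hb hab
  simp only [Set.mem_Iic] at ha hb
  have hdiff : depressedCubic s d b - depressedCubic s d a =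
      (b - a) * ((a ^ 2 - s ^ 2) + (a * b - s ^ 2) + (b ^ 2 - s ^ 2)) := by
    unfold depressedCubic; ring
  have hsq : 0 ≤ (a ^ 2 - s ^ 2) + (a * b - s ^ 2) + (b ^ 2 - s ^ 2) := by
    nlinarith [mul_le_mul_of_nonpos_left hb (by linarith : a ≤ 0)]
  nlinarith [mul_nonneg (sub_nonneg.2 hab) hsq]

lemma two_mul_pow_three_lt_of_depressedCubic_nonneg {s d a : ℝ} (hs : 0 ≤ s)
    (hmin : 2 * s ^ 2 * a < d) (ha : 0 ≤ depressedCubic s d a) (hdisc : 4 * s ^ 6 < d ^ 2) :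
    2 * s ^ 3 < d := by
  have hd : -(2 * s ^ 3) ≤ d := by
    rcases le_or_gt (-s) a with has | has
    · nlinarith [mul_le_mul_of_nonneg_left has (by positivity : (0 : ℝ) ≤ 2 * s ^ 2)]
    · have := depressedCubic_monotoneOn hs d has.le (Set.mem_Iic.2 le_rfl) has.le
      simp only [depressedCubic] at this ha
      nlinarith
  nlinarith [pow_nonneg hs 3]

lemma depressedCubic_nonneg_of_le {s d a u : ℝ} (hs : 0 ≤ s) (hmin : 2 * s ^ 2 * a < d)
    (ha : 0 ≤ depressedCubic s d a) (hdisc : 4 * s ^ 6 < d ^ 2) (hau : a ≤ u) :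
    0 ≤ depressedCubic s d u := by
  rcases le_or_gt (-s) u with hsu | hus
  · have hd := two_mul_pow_three_lt_of_depressedCubic_nonneg hs hmin ha hdisc
    rw [depressedCubic_eq_sq_mul_add]
    have : 0 ≤ (u - s) ^ 2 * (u + 2 * s) := mul_nonneg (sq_nonneg _) (by linarith)
    linarith
  · exact ha.trans (depressedCubic_monotoneOn hs d (hau.trans hus.le) hus.le hau)

/-- sufficient condition (b) for nonnegativity of a cubic on `[0, ∞)`. -/
theorem stmt_4 (p₀ p₁ p₂ p₃ : ℝ) (h₃ : 0 < p₃) (h₀ : 0 ≤ p₀)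
    (hσ : 0 < p₂ ^ 2 - 3 * p₁ * p₃)
    (hτ : p₁ * p₂ - 9 * p₀ * p₃ < 0)
    (hc : 4 * p₂ * (p₁ * p₂ - 9 * p₀ * p₃) <
      4 * p₁ * (p₂ ^ 2 - 3 * p₁ * p₃) +
      3 * p₃ * (p₁ * p₂ - 9 * p₀ * p₃) ^ 2 / (p₂ ^ 2 - 3 * p₁ * p₃)) :
    ∀ x : ℝ, 0 ≤ x → 0 ≤ p₃ * x ^ 3 + p₂ * x ^ 2 + p₁ * x + p₀ := by
  intro x hx
  set σ := p₂ ^ 2 - 3 * p₁ * p₃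
  set τ := p₁ * p₂ - 9 * p₀ * p₃
  set d := 2 * p₂ ^ 3 - 9 * p₁ * p₂ * p₃ + 27 * p₀ * p₃ ^ 2
  obtain ⟨s, hs0, hs⟩ : ∃ s : ℝ, 0 ≤ s ∧ s ^ 2 = σ := ⟨√σ, Real.sqrt_nonneg σ, Real.sq_sqrt hσ.le⟩
  have hsubst : depressedCubic s d (3 * p₃ * x + p₂) =
      27 * p₃ ^ 2 * (p₃ * x ^ 3 + p₂ * x ^ 2 + p₁ * x + p₀) := by
    simp only [depressedCubic, hs, σ, d]; ring
  have hmin : 2 * s ^ 2 * p₂ < d := by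
    have : d - 2 * σ * p₂ = -3 * (p₃ * τ) := by ring
    rw [hs]; nlinarith [mul_neg_of_pos_of_neg h₃ hτ]
  have hroot : 0 ≤ depressedCubic s d p₂ := by
    have : depressedCubic s d p₂ = 27 * p₀ * p₃ ^ 2 := by simp only [depressedCubic, hs, σ, d]; ring
    rw [this]; positivity
  have hdisc : 4 * s ^ 6 < d ^ 2 := by
    have hc' : 4 * p₂ * τ * σ < 4 * p₁ * σ * σ + 3 * p₃ * τ ^ 2 := by
      simpa only [add_mul, div_mul_cancel₀ _ hσ.ne'] using mul_lt_mul_of_pos_right hc hσ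
    have hid : d ^ 2 - 4 * σ ^ 3 = 3 * p₃ * (4 * p₁ * σ * σ + 3 * p₃ * τ ^ 2 - 4 * p₂ * τ * σ) := by
      ring
    have : s ^ 6 = σ ^ 3 := by rw [← hs]; ring
    nlinarith [mul_pos h₃ (sub_pos.2 hc')]
  have hu : p₂ ≤ 3 * p₃ * x + p₂ := le_add_of_nonneg_left (by positivity)
  have := depressedCubic_nonneg_of_le hs0 hmin hroot hdisc hu
  rw [hsubst] at this
  exact nonneg_of_mul_nonneg_right this (by positivity)
end
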